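/- arXiv:1906.08552 — 3 statements merged into one kernel-verified Lean document; each statement's English description precedes it below -/
import Mathlib

section
/- Let T > 0, a, σ ∈ ℝ, H₁, H₂ ∈ (0,1), and ε ≥ 0. Let B¹ and B² be stochastic processes on [0,T] defined on a common probability space, each with continuous sample paths, such that every finite real linear combination of values of B¹ and B² is a centered Gaussian random variable, E[(Bⁱ_s)²] = s^{2H_i} for i = 1,2 and all s ∈ [0,T], and sup_{s∈[0,T]} E[|B¹_s − B²_s|²] ≤ ε². Then E[|∫₀ᵀ e^{a s + σ B¹_s} ds − ∫₀ᵀ e^{a s + σ B²_s} ds|²] ≤ ε² · (√3 T σ²/4) · ∫₀ᵀ (8 e^{4 a s + 8 σ² s^{2H₁}} + 8 e^{4 a s + 8 σ² s^{2H₂}})^{1/2} ds. -/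
/-!
Write `Δ_s = e^{as + σB¹_s} - e^{as + σB²_s}`. Cauchy–Schwarz in time gives pathwise
`(∫₀ᵀ Δ_s ds)² ≤ T ∫₀ᵀ Δ_s² ds`, and Fubini reduces the claim to a bound on `E[Δ_s²]`
for each fixed `s`. There `|eˣ - eʸ| ≤ |x - y| (eˣ + eʸ) / 2` (equivalently `tanh u ≤ u`)
and Cauchy–Schwarz in `ω` give `E[Δ_s²] ≤ σ²/4 · E[Z⁴]^{1/2} · E[(W¹ + W²)⁴]^{1/2}` with
`Z = B¹_s - B²_s` and `Wⁱ = e^{as + σBⁱ_s}`. Gaussianity gives `E[Z⁴] = 3 E[Z²]² ≤ 3ε⁴`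
and the lognormal moments `E[(Wⁱ)⁴] = e^{4as + 8σ² E[(Bⁱ_s)²]}`; finally
`(x + y)⁴ ≤ 8 (x⁴ + y⁴)`. The Gaussian moments are read off the derivatives at `0` of the
moment generating function `t ↦ e^{v t² / 2}`.
-/

open MeasureTheory ProbabilityTheory Set Real Function
open scoped NNReal

lemma Real.sinh_le_mul_cosh {u : ℝ} (hu : 0 ≤ u) : sinh u ≤ u * cosh u := by
  have hderiv (t : ℝ) : HasDerivAt (fun t => t * cosh t - sinh t) (t * sinh t) t :=
    (((hasDerivAt_id' t).fun_mul (hasDerivAt_cosh t)).fun_sub (hasDerivAt_sinh t)).congr_deriv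
      (by ring)
  have hmono : MonotoneOn (fun t => t * cosh t - sinh t) (Ici 0) := by
    refine monotoneOn_of_deriv_nonneg (convex_Ici 0) (by fun_prop)
      (fun t _ => (hderiv t).differentiableAt.differentiableWithinAt) fun t ht => ?_
    rw [interior_Ici] at ht
    rw [(hderiv t).deriv]
    exact mul_nonneg ht.le (sinh_nonneg_iff.2 ht.le)
  simpa using hmono self_mem_Ici hu hu

lemma Real.sinh_sq_le_sq_mul_cosh_sq (u : ℝ) : sinh u ^ 2 ≤ u ^ 2 * cosh u ^ 2 := by
  wlog hu : 0 ≤ u generalizing u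
  · simpa using this (-u) (by linarith)
  rw [← mul_pow]
  exact pow_le_pow_left₀ (sinh_nonneg_iff.2 hu) (sinh_le_mul_cosh hu) 2

lemma Real.sq_exp_sub_exp_le (x y : ℝ) :
    (exp x - exp y) ^ 2 ≤ (x - y) ^ 2 * (exp x + exp y) ^ 2 / 4 := by
  obtain ⟨m, u, rfl, rfl⟩ : ∃ m u, x = m + u ∧ y = m - u :=
    ⟨(x + y) / 2, (x - y) / 2, by ring, by ring⟩
  have hsub : exp (m + u) - exp (m - u) = 2 * exp m * sinh u := by
    rw [sinh_eq, exp_add, exp_sub, exp_neg]; field_simp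
  have hadd : exp (m + u) + exp (m - u) = 2 * exp m * cosh u := by
    rw [cosh_eq, exp_add, exp_sub, exp_neg]; field_simp
  rw [hsub, hadd]
  nlinarith [mul_le_mul_of_nonneg_left (sinh_sq_le_sq_mul_cosh_sq u) (sq_nonneg (exp m))]

section CauchySchwarz

variable {α : Type*} [MeasurableSpace α] {μ : Measure α} {f g : α → ℝ}

lemma MeasureTheory.integral_mul_le_sqrt_mul_sqrt (hf : MemLp f 2 μ) (hg : MemLp g 2 μ) :
    ∫ a, f a * g a ∂μ ≤ √(∫ a, f a ^ 2 ∂μ) * √(∫ a, g a ^ 2 ∂μ) := by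
  have hHolder := integral_mul_norm_le_Lp_mul_Lq Real.HolderConjugate.two_two
    (by simpa using hf) (by simpa using hg)
  simp only [norm_eq_abs, rpow_two, sq_abs, ← sqrt_eq_rpow] at hHolder
  calc ∫ a, f a * g a ∂μ ≤ ‖∫ a, f a * g a ∂μ‖ := le_norm_self _
    _ ≤ ∫ a, ‖f a * g a‖ ∂μ := norm_integral_le_integral_norm _
    _ ≤ _ := by simpa only [norm_mul, norm_eq_abs] using hHolder

lemma MeasureTheory.sq_integral_le_measureReal_mul_integral_sq [IsFiniteMeasure μ]
    (hf : MemLp f 2 μ) : (∫ a, f a ∂μ) ^ 2 ≤ μ.real univ * ∫ a, f a ^ 2 ∂μ := by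
  have hCS := integral_mul_le_sqrt_mul_sqrt hf.abs (memLp_const (1 : ℝ))
  simp only [Pi.abs_apply, mul_one, sq_abs, one_pow, integral_const, smul_eq_mul] at hCS
  calc (∫ a, f a ∂μ) ^ 2 ≤ (∫ a, |f a| ∂μ) ^ 2 := by
        rw [← sq_abs]
        exact pow_le_pow_left₀ (abs_nonneg _) abs_integral_le_integral_abs 2
    _ ≤ (√(∫ a, f a ^ 2 ∂μ) * √(μ.real univ)) ^ 2 :=
        pow_le_pow_left₀ (integral_nonneg fun _ => abs_nonneg _) hCS 2
    _ = μ.real univ * ∫ a, f a ^ 2 ∂μ := by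
        rw [mul_pow, sq_sqrt (integral_nonneg fun _ => sq_nonneg _), sq_sqrt measureReal_nonneg,
          mul_comm]

end CauchySchwarz

lemma Real.iteratedDeriv_succ_exp_half_mul_sq {v : ℝ} {n : ℕ} {p p' q : ℝ → ℝ}
    (hn : iteratedDeriv n (fun t => exp (v * t ^ 2 / 2)) = fun t => p t * exp (v * t ^ 2 / 2))
    (hp : ∀ t, HasDerivAt p (p' t) t) (hq : ∀ t, p' t + v * t * p t = q t) :
    iteratedDeriv (n + 1) (fun t => exp (v * t ^ 2 / 2))
      = fun t => q t * exp (v * t ^ 2 / 2) := by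
  rw [iteratedDeriv_succ, hn]
  funext t
  have he : HasDerivAt (fun t => exp (v * t ^ 2 / 2)) (exp (v * t ^ 2 / 2) * (v * t)) t := by
    convert (((hasDerivAt_pow 2 t).const_mul v).div_const 2).exp using 1; push_cast; ring
  rw [((hp t).fun_mul he).deriv, ← hq]
  ring

lemma Real.iteratedDeriv_two_exp_half_mul_sq (v : ℝ) :
    iteratedDeriv 2 (fun t => exp (v * t ^ 2 / 2))
      = fun t => (v + v ^ 2 * t ^ 2) * exp (v * t ^ 2 / 2) := by
  have h0 : iteratedDeriv 0 (fun t => exp (v * t ^ 2 / 2))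
      = fun t => 1 * exp (v * t ^ 2 / 2) := by
    simp
  have h1 := iteratedDeriv_succ_exp_half_mul_sq (q := fun t => v * t) h0
    (fun t => hasDerivAt_const t 1) (fun t => by ring)
  exact iteratedDeriv_succ_exp_half_mul_sq h1 (fun t => (hasDerivAt_id t).const_mul v)
    (fun t => by ring)

lemma Real.iteratedDeriv_four_exp_half_mul_sq (v : ℝ) :
    iteratedDeriv 4 (fun t => exp (v * t ^ 2 / 2))
      = fun t => (3 * v ^ 2 + 6 * v ^ 3 * t ^ 2 + v ^ 4 * t ^ 4) * exp (v * t ^ 2 / 2) := by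
  have h3 := iteratedDeriv_succ_exp_half_mul_sq (q := fun t => 3 * v ^ 2 * t + v ^ 3 * t ^ 3)
    (iteratedDeriv_two_exp_half_mul_sq v)
    (fun t => ((hasDerivAt_pow 2 t).const_mul (v ^ 2)).const_add v) (fun t => by ring)
  exact iteratedDeriv_succ_exp_half_mul_sq h3
    (fun t => ((hasDerivAt_id t).const_mul (3 * v ^ 2)).add
      ((hasDerivAt_pow 3 t).const_mul (v ^ 3)))
    (fun t => by ring)

lemma Real.exp_add_mul_pow (c σ x : ℝ) (n : ℕ) :
    exp (c + σ * x) ^ n = exp (n * c) * exp (n * σ * x) := by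
  rw [← exp_nat_mul, ← exp_add]
  ring_nf

namespace ProbabilityTheory

variable {Ω : Type*} [MeasurableSpace Ω] {P : Measure Ω} {X Y : Ω → ℝ} {v vX vY : ℝ≥0}

lemma aemeasurable_of_map_eq_gaussianReal (hX : P.map X = gaussianReal 0 v) : AEMeasurable X P :=
  aemeasurable_of_map_neZero (by rw [hX]; infer_instance)

lemma mgf_eq_of_map_eq_gaussianReal (hX : P.map X = gaussianReal 0 v) :
    mgf X P = fun t => exp (v * t ^ 2 / 2) := by
  funext t
  simp [mgf_gaussianReal hX]

lemma integrable_exp_mul_of_map_eq_gaussianReal (hX : P.map X = gaussianReal 0 v) (t : ℝ) :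
    Integrable (fun ω => exp (t * X ω)) P :=
  have : NeZero P :=
    ⟨fun h => IsProbabilityMeasure.ne_zero (gaussianReal 0 v) (by simpa [h] using hX.symm)⟩
  mgf_pos_iff.mp (by rw [mgf_eq_of_map_eq_gaussianReal hX]; positivity)

lemma integrableExpSet_eq_univ_of_map_eq_gaussianReal (hX : P.map X = gaussianReal 0 v) :
    integrableExpSet X P = univ :=
  eq_univ_of_forall (integrable_exp_mul_of_map_eq_gaussianReal hX)

lemma integral_pow_of_map_eq_gaussianReal (hX : P.map X = gaussianReal 0 v) (n : ℕ) :
    ∫ ω, X ω ^ n ∂P = iteratedDeriv n (fun t => exp (v * t ^ 2 / 2)) 0 := by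
  rw [← mgf_eq_of_map_eq_gaussianReal hX, iteratedDeriv_mgf_zero
    (by simp [integrableExpSet_eq_univ_of_map_eq_gaussianReal hX])]
  rfl

lemma integral_sq_of_map_eq_gaussianReal (hX : P.map X = gaussianReal 0 v) :
    ∫ ω, X ω ^ 2 ∂P = v := by
  simp [integral_pow_of_map_eq_gaussianReal hX, iteratedDeriv_two_exp_half_mul_sq]

lemma integral_pow_four_of_map_eq_gaussianReal (hX : P.map X = gaussianReal 0 v) :
    ∫ ω, X ω ^ 4 ∂P = 3 * (∫ ω, X ω ^ 2 ∂P) ^ 2 := by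
  simp [integral_pow_of_map_eq_gaussianReal hX, iteratedDeriv_two_exp_half_mul_sq,
    iteratedDeriv_four_exp_half_mul_sq]

lemma integrable_pow_four_of_map_eq_gaussianReal (hX : P.map X = gaussianReal 0 v) :
    Integrable (fun ω => X ω ^ 4) P := by
  have hX4 : MemLp X 4 P := memLp_of_mem_interior_integrableExpSet
    (by simp [integrableExpSet_eq_univ_of_map_eq_gaussianReal hX]) 4
  simpa [Even.pow_abs ⟨2, rfl⟩] using hX4.integrable_norm_pow (p := 4) four_ne_zero

lemma integrable_exp_add_mul_pow_of_map_eq_gaussianReal (hX : P.map X = gaussianReal 0 v)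
    (c σ : ℝ) (n : ℕ) : Integrable (fun ω => exp (c + σ * X ω) ^ n) P := by
  simpa only [exp_add_mul_pow] using
    (integrable_exp_mul_of_map_eq_gaussianReal hX (n * σ)).const_mul (exp (n * c))

lemma integral_exp_add_mul_pow_of_map_eq_gaussianReal (hX : P.map X = gaussianReal 0 v)
    (c σ : ℝ) (n : ℕ) :
    ∫ ω, exp (c + σ * X ω) ^ n ∂P = exp (n * c + v * (n * σ) ^ 2 / 2) := by
  simp only [exp_add_mul_pow]
  rw [integral_const_mul, ← mgf, mgf_eq_of_map_eq_gaussianReal hX, exp_add]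

lemma integral_exp_add_exp_pow_four_le (hX : P.map X = gaussianReal 0 vX)
    (hY : P.map Y = gaussianReal 0 vY) (c σ : ℝ) :
    Integrable (fun ω => (exp (c + σ * X ω) + exp (c + σ * Y ω)) ^ 4) P ∧
      ∫ ω, (exp (c + σ * X ω) + exp (c + σ * Y ω)) ^ 4 ∂P
        ≤ 8 * exp (4 * c + 8 * σ ^ 2 * vX) + 8 * exp (4 * c + 8 * σ ^ 2 * vY) := by
  have := aemeasurable_of_map_eq_gaussianReal hX
  have := aemeasurable_of_map_eq_gaussianReal hY
  have h₁ := integrable_exp_add_mul_pow_of_map_eq_gaussianReal hX c σ 4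
  have h₂ := integrable_exp_add_mul_pow_of_map_eq_gaussianReal hY c σ 4
  have hle (ω : Ω) : (exp (c + σ * X ω) + exp (c + σ * Y ω)) ^ 4
      ≤ 8 * (exp (c + σ * X ω) ^ 4 + exp (c + σ * Y ω) ^ 4) :=
    (add_pow_le (exp_pos _).le (exp_pos _).le 4).trans_eq (by norm_num)
  have hint : Integrable (fun ω => (exp (c + σ * X ω) + exp (c + σ * Y ω)) ^ 4) P :=
    ((h₁.add h₂).const_mul 8).mono' (by fun_prop) (ae_of_all _ fun ω => by
      rw [norm_of_nonneg (by positivity)]; exact hle ω)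
  refine ⟨hint, (integral_mono hint ((h₁.add h₂).const_mul 8) hle).trans_eq ?_⟩
  simp only [Pi.add_apply]
  rw [integral_const_mul, integral_add h₁ h₂, integral_exp_add_mul_pow_of_map_eq_gaussianReal hX,
    integral_exp_add_mul_pow_of_map_eq_gaussianReal hY]
  ring_nf

lemma integral_sq_exp_sub_exp_le
    (hXY : ∀ α β : ℝ, ∃ v : ℝ≥0, P.map (fun ω => α * X ω + β * Y ω) = gaussianReal 0 v)
    (c σ : ℝ) :
    Integrable (fun ω => (exp (c + σ * X ω) - exp (c + σ * Y ω)) ^ 2) P ∧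
      ∫ ω, (exp (c + σ * X ω) - exp (c + σ * Y ω)) ^ 2 ∂P
        ≤ (∫ ω, (X ω - Y ω) ^ 2 ∂P) * (√3 * σ ^ 2 / 4) *
          √(8 * exp (4 * c + 8 * σ ^ 2 * ∫ ω, X ω ^ 2 ∂P) +
            8 * exp (4 * c + 8 * σ ^ 2 * ∫ ω, Y ω ^ 2 ∂P)) := by
  obtain ⟨vX, hX⟩ : ∃ v : ℝ≥0, P.map X = gaussianReal 0 v := by simpa using hXY 1 0
  obtain ⟨vY, hY⟩ : ∃ v : ℝ≥0, P.map Y = gaussianReal 0 v := by simpa using hXY 0 1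
  obtain ⟨vZ, hZ⟩ : ∃ v : ℝ≥0, P.map (fun ω => X ω - Y ω) = gaussianReal 0 v := by
    simpa [← sub_eq_add_neg] using hXY 1 (-1)
  have := aemeasurable_of_map_eq_gaussianReal hX
  have := aemeasurable_of_map_eq_gaussianReal hY
  obtain ⟨hS4int, hS4le⟩ := integral_exp_add_exp_pow_four_le hX hY c σ
  rw [integral_sq_of_map_eq_gaussianReal hX, integral_sq_of_map_eq_gaussianReal hY]
  set W₁ : Ω → ℝ := fun ω => exp (c + σ * X ω)
  set W₂ : Ω → ℝ := fun ω => exp (c + σ * Y ω)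
  have hZ2 : MemLp (fun ω => (X ω - Y ω) ^ 2) 2 P :=
    (memLp_two_iff_integrable_sq (by fun_prop)).2
      (by simpa [← pow_mul] using integrable_pow_four_of_map_eq_gaussianReal hZ)
  have hS2 : MemLp (fun ω => (W₁ ω + W₂ ω) ^ 2) 2 P :=
    (memLp_two_iff_integrable_sq (by fun_prop)).2 (by simpa [← pow_mul] using hS4int)
  have hprod : Integrable (fun ω => (X ω - Y ω) ^ 2 * (W₁ ω + W₂ ω) ^ 2) P :=
    hZ2.integrable_mul hS2
  have hbound (ω : Ω) :
      (W₁ ω - W₂ ω) ^ 2 ≤ σ ^ 2 / 4 * ((X ω - Y ω) ^ 2 * (W₁ ω + W₂ ω) ^ 2) :=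
    (sq_exp_sub_exp_le _ _).trans_eq (by ring)
  refine ⟨(hprod.const_mul _).mono' (by fun_prop)
    (ae_of_all _ fun ω => by rw [norm_of_nonneg (sq_nonneg _)]; exact hbound ω), ?_⟩
  have hZ4 : √(∫ ω, (X ω - Y ω) ^ 4 ∂P) = √3 * ∫ ω, (X ω - Y ω) ^ 2 ∂P := by
    rw [integral_pow_four_of_map_eq_gaussianReal hZ, sqrt_mul zero_le_three,
      sqrt_sq (integral_nonneg fun _ => sq_nonneg _)]
  have hZ2nonneg : 0 ≤ ∫ ω, (X ω - Y ω) ^ 2 ∂P := integral_nonneg fun _ => sq_nonneg _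
  calc ∫ ω, (W₁ ω - W₂ ω) ^ 2 ∂P
      ≤ ∫ ω, σ ^ 2 / 4 * ((X ω - Y ω) ^ 2 * (W₁ ω + W₂ ω) ^ 2) ∂P :=
        integral_mono_of_nonneg (ae_of_all _ fun _ => sq_nonneg _) (hprod.const_mul _)
          (ae_of_all _ hbound)
    _ = σ ^ 2 / 4 * ∫ ω, (X ω - Y ω) ^ 2 * (W₁ ω + W₂ ω) ^ 2 ∂P := integral_const_mul _ _
    _ ≤ σ ^ 2 / 4 * (√(∫ ω, (X ω - Y ω) ^ 4 ∂P) * √(∫ ω, (W₁ ω + W₂ ω) ^ 4 ∂P)) := by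
        gcongr
        simpa [← pow_mul] using integral_mul_le_sqrt_mul_sqrt hZ2 hS2
    _ = (∫ ω, (X ω - Y ω) ^ 2 ∂P) * (√3 * σ ^ 2 / 4) * √(∫ ω, (W₁ ω + W₂ ω) ^ 4 ∂P) := by
        rw [hZ4]; ring
    _ ≤ _ := by gcongr

end ProbabilityTheory

section SquareOfTimeIntegral

variable {S Ω : Type*} [MeasurableSpace S] [MeasurableSpace Ω] {μ : Measure S} {P : Measure Ω}

lemma MeasureTheory.integral_sq_integral_le [IsFiniteMeasure μ] [SFinite P] {F : S → Ω → ℝ}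
    {g : S → ℝ} (hF : Measurable (uncurry F)) (hg : Integrable g μ)
    (hFint : ∀ᵐ s ∂μ, Integrable (fun ω => F s ω ^ 2) P)
    (hFg : ∀ᵐ s ∂μ, ∫ ω, F s ω ^ 2 ∂P ≤ g s) :
    ∫ ω, (∫ s, F s ω ∂μ) ^ 2 ∂P ≤ μ.real univ * ∫ s, g s ∂μ := by
  have hF2 : Measurable (uncurry fun s ω => F s ω ^ 2) := hF.pow_const 2
  have hint : Integrable (uncurry fun s ω => F s ω ^ 2) (μ.prod P) := by
    refine (integrable_prod_iff hF2.aestronglyMeasurable).2 ⟨hFint, hg.mono'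
      hF2.aestronglyMeasurable.norm.integral_prod_right' ?_⟩
    filter_upwards [hFg] with s hs
    have h0 : 0 ≤ ∫ ω, F s ω ^ 2 ∂P := integral_nonneg fun ω => sq_nonneg _
    simpa [abs_of_nonneg h0] using hs
  have hpath : ∀ᵐ ω ∂P, (∫ s, F s ω ∂μ) ^ 2 ≤ μ.real univ * ∫ s, F s ω ^ 2 ∂μ := by
    filter_upwards [hint.prod_left_ae] with ω hω
    exact sq_integral_le_measureReal_mul_integral_sq
      ((memLp_two_iff_integrable_sq (hF.comp measurable_prodMk_right).aestronglyMeasurable).2 hω)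
  calc ∫ ω, (∫ s, F s ω ∂μ) ^ 2 ∂P
      ≤ ∫ ω, μ.real univ * ∫ s, F s ω ^ 2 ∂μ ∂P :=
        integral_mono_of_nonneg (ae_of_all _ fun _ => sq_nonneg _)
          (hint.integral_prod_right.const_mul _) hpath
    _ = μ.real univ * ∫ s, ∫ ω, F s ω ^ 2 ∂P ∂μ := by
        rw [integral_const_mul, integral_integral_swap hint]
    _ ≤ μ.real univ * ∫ s, g s ∂μ :=
        mul_le_mul_of_nonneg_left (integral_mono_ae hint.integral_prod_left hg hFg)
          measureReal_nonneg

-- Clamping time into `[0, T]` gives a jointly measurable process with the same time integrals.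
lemma MeasureTheory.integral_sq_intervalIntegral_le [SFinite P] {T : ℝ} (hT : 0 ≤ T)
    {F : ℝ → Ω → ℝ} {g : ℝ → ℝ} (hcont : ∀ ω, ContinuousOn (fun s => F s ω) (Icc 0 T))
    (hmeas : ∀ s ∈ Icc 0 T, Measurable (F s)) (hg : IntervalIntegrable g volume 0 T)
    (hFint : ∀ s ∈ Ioc 0 T, Integrable (fun ω => F s ω ^ 2) P)
    (hFg : ∀ s ∈ Ioc 0 T, ∫ ω, F s ω ^ 2 ∂P ≤ g s) :
    ∫ ω, (∫ s in 0..T, F s ω) ^ 2 ∂P ≤ T * ∫ s in 0..T, g s := by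
  set F' : ℝ → Ω → ℝ := fun s => F (projIcc 0 T hT s)
  have hF' (s : ℝ) (hs : s ∈ Ioc 0 T) : F' s = F s := by
    simp [F', projIcc_of_mem _ (Ioc_subset_Icc_self hs)]
  have hF'm : Measurable (uncurry F') := measurable_uncurry_of_continuous_of_measurable
    (fun ω => (hcont ω).comp_continuous (continuous_subtype_val.comp continuous_projIcc)
      fun s => (projIcc 0 T hT s).2)
    fun s => hmeas _ (projIcc 0 T hT s).2
  have key := integral_sq_integral_le (μ := volume.restrict (Ioc 0 T)) (P := P) hF'm
    ((intervalIntegrable_iff_integrableOn_Ioc_of_le hT).1 hg)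
    (ae_restrict_of_forall_mem measurableSet_Ioc fun s hs => hF' s hs ▸ hFint s hs)
    (ae_restrict_of_forall_mem measurableSet_Ioc fun s hs => hF' s hs ▸ hFg s hs)
  have hpath (ω : Ω) : ∫ s in Ioc 0 T, F' s ω = ∫ s in Ioc 0 T, F s ω :=
    setIntegral_congr_fun measurableSet_Ioc fun s hs => by rw [hF' s hs]
  simpa [hpath, intervalIntegral.integral_of_le hT, Real.volume_real_Ioc_of_le hT] using key

end SquareOfTimeIntegral

theorem exponential_functional_L2_estimate_general {Ω : Type*} [MeasurableSpace Ω]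
    (P : Measure Ω) [IsProbabilityMeasure P]
    (T a σ H₁ H₂ ε : ℝ) (hT : 0 < T)
    (hH₁ : H₁ ∈ Set.Ioo (0:ℝ) 1) (hH₂ : H₂ ∈ Set.Ioo (0:ℝ) 1)
    (B₁ B₂ : ℝ → Ω → ℝ)
    (hcont₁ : ∀ ω, ContinuousOn (fun s => B₁ s ω) (Icc 0 T))
    (hcont₂ : ∀ ω, ContinuousOn (fun s => B₂ s ω) (Icc 0 T))
    (hmeas₁ : ∀ s ∈ Icc (0:ℝ) T, Measurable (B₁ s))
    (hmeas₂ : ∀ s ∈ Icc (0:ℝ) T, Measurable (B₂ s))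
    (hgauss : ∀ (n : ℕ) (c d : Fin n → ℝ) (s t : Fin n → ℝ),
      (∀ i, s i ∈ Icc (0:ℝ) T) → (∀ i, t i ∈ Icc (0:ℝ) T) →
      ∃ v : NNReal,
        P.map (fun ω => ∑ i, (c i * B₁ (s i) ω + d i * B₂ (t i) ω)) = gaussianReal 0 v)
    (hvar₁ : ∀ s ∈ Icc (0:ℝ) T, ∫ ω, (B₁ s ω) ^ 2 ∂P = s ^ (2*H₁))
    (hvar₂ : ∀ s ∈ Icc (0:ℝ) T, ∫ ω, (B₂ s ω) ^ 2 ∂P = s ^ (2*H₂))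
    (hclose : ∀ s ∈ Icc (0:ℝ) T, ∫ ω, |B₁ s ω - B₂ s ω| ^ 2 ∂P ≤ ε ^ 2) :
    ∫ ω, |(∫ s in (0:ℝ)..T, Real.exp (a * s + σ * B₁ s ω)) -
          (∫ s in (0:ℝ)..T, Real.exp (a * s + σ * B₂ s ω))| ^ 2 ∂P
      ≤ ε ^ 2 * (Real.sqrt 3 * T * σ ^ 2 / 4) *
          ∫ s in (0:ℝ)..T,
            Real.sqrt (8 * Real.exp (4*a*s + 8*σ^2 * s ^ (2*H₁)) +
                       8 * Real.exp (4*a*s + 8*σ^2 * s ^ (2*H₂))) := by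
  set F : ℝ → Ω → ℝ := fun s ω => exp (a * s + σ * B₁ s ω) - exp (a * s + σ * B₂ s ω)
  set g : ℝ → ℝ := fun s => ε ^ 2 * (√3 * σ ^ 2 / 4) *
    √(8 * exp (4 * a * s + 8 * σ ^ 2 * s ^ (2 * H₁)) +
      8 * exp (4 * a * s + 8 * σ ^ 2 * s ^ (2 * H₂)))
  have hg : Continuous g := by
    have := continuous_rpow_const (by linarith [hH₁.1] : (0 : ℝ) ≤ 2 * H₁)
    have := continuous_rpow_const (by linarith [hH₂.1] : (0 : ℝ) ≤ 2 * H₂)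
    fun_prop
  have hmoment (s : ℝ) (hs : s ∈ Icc 0 T) :
      Integrable (fun ω => F s ω ^ 2) P ∧ ∫ ω, F s ω ^ 2 ∂P ≤ g s := by
    obtain ⟨hint, hle⟩ := integral_sq_exp_sub_exp_le (X := B₁ s) (Y := B₂ s)
      (fun α β => by simpa using hgauss 1 ![α] ![β] ![s] ![s] (by simp [hs]) (by simp [hs]))
      (a * s) σ
    refine ⟨hint, hle.trans ?_⟩
    rw [hvar₁ s hs, hvar₂ s hs, ← mul_assoc 4 a s]
    simp only [g]
    gcongr
    simpa using hclose s hs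
  have hLHS (ω : Ω) : (∫ s in (0:ℝ)..T, exp (a * s + σ * B₁ s ω)) -
      (∫ s in (0:ℝ)..T, exp (a * s + σ * B₂ s ω)) = ∫ s in (0:ℝ)..T, F s ω := by
    have hint (B : ℝ → Ω → ℝ) (hB : ContinuousOn (fun s => B s ω) (Icc 0 T)) :
        IntervalIntegrable (fun s => exp (a * s + σ * B s ω)) volume 0 T :=
      ContinuousOn.intervalIntegrable (by rw [uIcc_of_le hT.le]; fun_prop)
    exact (intervalIntegral.integral_sub (hint B₁ (hcont₁ ω)) (hint B₂ (hcont₂ ω))).symm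
  calc _ = ∫ ω, (∫ s in (0:ℝ)..T, F s ω) ^ 2 ∂P := by simp only [hLHS, sq_abs]
    _ ≤ T * ∫ s in (0:ℝ)..T, g s :=
        integral_sq_intervalIntegral_le hT.le
          (fun ω => by have := hcont₁ ω; have := hcont₂ ω; fun_prop)
          (fun s hs => by have := hmeas₁ s hs; have := hmeas₂ s hs; fun_prop)
          (hg.intervalIntegrable 0 T) (fun s hs => (hmoment s (Ioc_subset_Icc_self hs)).1)
          (fun s hs => (hmoment s (Ioc_subset_Icc_self hs)).2)
    _ = _ := by
        simp only [g, intervalIntegral.integral_const_mul]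
        ring

theorem exponential_functional_L2_estimate {Ω : Type*} [MeasurableSpace Ω]
    (P : Measure Ω) [IsProbabilityMeasure P]
    (T a σ H₁ H₂ ε : ℝ) (hT : 0 < T)
    (hH₁ : H₁ ∈ Set.Ioo (0:ℝ) 1) (hH₂ : H₂ ∈ Set.Ioo (0:ℝ) 1) (hε : 0 ≤ ε)
    (B₁ B₂ : ℝ → Ω → ℝ)
    (hcont₁ : ∀ ω, ContinuousOn (fun s => B₁ s ω) (Icc 0 T))
    (hcont₂ : ∀ ω, ContinuousOn (fun s => B₂ s ω) (Icc 0 T))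
    (hmeas₁ : ∀ s ∈ Icc (0:ℝ) T, Measurable (B₁ s))
    (hmeas₂ : ∀ s ∈ Icc (0:ℝ) T, Measurable (B₂ s))
    (hgauss : ∀ (n : ℕ) (c d : Fin n → ℝ) (s t : Fin n → ℝ),
      (∀ i, s i ∈ Icc (0:ℝ) T) → (∀ i, t i ∈ Icc (0:ℝ) T) →
      ∃ v : NNReal,
        P.map (fun ω => ∑ i, (c i * B₁ (s i) ω + d i * B₂ (t i) ω)) = gaussianReal 0 v)
    (hvar₁ : ∀ s ∈ Icc (0:ℝ) T, ∫ ω, (B₁ s ω) ^ 2 ∂P = s ^ (2*H₁))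
    (hvar₂ : ∀ s ∈ Icc (0:ℝ) T, ∫ ω, (B₂ s ω) ^ 2 ∂P = s ^ (2*H₂))
    (hclose : ∀ s ∈ Icc (0:ℝ) T, ∫ ω, |B₁ s ω - B₂ s ω| ^ 2 ∂P ≤ ε ^ 2) :
    ∫ ω, |(∫ s in (0:ℝ)..T, Real.exp (a * s + σ * B₁ s ω)) -
          (∫ s in (0:ℝ)..T, Real.exp (a * s + σ * B₂ s ω))| ^ 2 ∂P
      ≤ ε ^ 2 * (Real.sqrt 3 * T * σ ^ 2 / 4) *
          ∫ s in (0:ℝ)..T,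
            Real.sqrt (8 * Real.exp (4*a*s + 8*σ^2 * s ^ (2*H₁)) +
                       8 * Real.exp (4*a*s + 8*σ^2 * s ^ (2*H₂))) :=
  exponential_functional_L2_estimate_general P T a σ H₁ H₂ ε hT hH₁ hH₂ B₁ B₂ hcont₁ hcont₂ hmeas₁
    hmeas₂ hgauss hvar₁ hvar₂ hclose
end

section
/- For every H ∈ (0,1) and T > 0, ∫₀ᵀ ∫₀ᵀ (s^{2H} + t^{2H} − |t − s|^{2H})/2 ds dt = T^{2H+2}/(2H+2). -/
/-!
Integrating in `s` first, `∫₀ᵀ |t - s|^a ds` splits at `s = t` into two power integrals and equals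
`(t^(a+1) + (T - t)^(a+1)) / (a + 1)`; what remains in `t` is again a combination of powers.
The computation goes through for every exponent `a > -1`, where `x ↦ |x|^a` is locally integrable.
-/

open intervalIntegral Real
open MeasureTheory (volume)

theorem intervalIntegrable_abs_rpow {a : ℝ} (ha : -1 < a) (b c : ℝ) :
    IntervalIntegrable (fun x : ℝ => |x| ^ a) volume b c := by
  have from_zero_of_nonneg : ∀ c : ℝ, 0 ≤ c →
      IntervalIntegrable (fun x : ℝ => |x| ^ a) volume 0 c := fun c hc =>
    (intervalIntegrable_rpow' ha).congr fun x hx => by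
      rw [Set.uIoc_of_le hc] at hx
      simp only [abs_of_pos hx.1]
  have from_zero : ∀ c : ℝ, IntervalIntegrable (fun x : ℝ => |x| ^ a) volume 0 c := by
    intro c
    rcases le_total 0 c with hc | hc
    · exact from_zero_of_nonneg c hc
    · simpa using (from_zero_of_nonneg (-c) (neg_nonneg.mpr hc)).comp_sub_left 0
  exact (from_zero b).symm.trans (from_zero c)

theorem integral_rpow_from_zero {a : ℝ} (ha : -1 < a) (x : ℝ) :
    ∫ y in (0:ℝ)..x, y ^ a = x ^ (a + 1) / (a + 1) := by
  rw [integral_rpow (Or.inl ha), zero_rpow (by linarith), sub_zero]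

theorem integral_abs_sub_rpow {a b c t : ℝ} (ha : -1 < a) (hbt : b ≤ t) (htc : t ≤ c) :
    ∫ s in b..c, |t - s| ^ a = ((t - b) ^ (a + 1) + (c - t) ^ (a + 1)) / (a + 1) := by
  have hint : ∀ b c : ℝ, IntervalIntegrable (fun s => |t - s| ^ a) volume b c :=
    fun b c => by simpa using (intervalIntegrable_abs_rpow ha (t - b) (t - c)).comp_sub_left t
  have left : ∫ s in b..t, |t - s| ^ a = (t - b) ^ (a + 1) / (a + 1) := by
    rw [integral_congr (g := fun s => (t - s) ^ a) fun s hs => by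
        rw [Set.uIcc_of_le hbt] at hs
        simp only [abs_of_nonneg (sub_nonneg.mpr hs.2)],
      integral_comp_sub_left (fun x => x ^ a), sub_self, integral_rpow_from_zero ha]
  have right : ∫ s in t..c, |t - s| ^ a = (c - t) ^ (a + 1) / (a + 1) := by
    rw [integral_congr (g := fun s => (s - t) ^ a) fun s hs => by
        rw [Set.uIcc_of_le htc] at hs
        simp only [abs_sub_comm t, abs_of_nonneg (sub_nonneg.mpr hs.1)],
      integral_comp_sub_right (fun x => x ^ a), sub_self, integral_rpow_from_zero ha]
  rw [← integral_add_adjacent_intervals (hint b t) (hint t c), left, right, add_div]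

/-- With `a = 2 * H`, this is the covariance `R_H(s, t)` of fractional Brownian motion. -/
noncomputable def fbmCovariance (a s t : ℝ) : ℝ := (s ^ a + t ^ a - |t - s| ^ a) / 2

theorem integral_fbmCovariance {a T t : ℝ} (ha : -1 < a) (ht0 : 0 ≤ t) (htT : t ≤ T) :
    ∫ s in (0:ℝ)..T, fbmCovariance a s t
      = (T ^ (a + 1) + (a + 1) * T * t ^ a - t ^ (a + 1) - (T - t) ^ (a + 1)) / (2 * (a + 1)) := by
  have ha1 : a + 1 ≠ 0 := by linarith
  have hint : IntervalIntegrable (fun s => |t - s| ^ a) volume 0 T := by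
    simpa using (intervalIntegrable_abs_rpow ha t (t - T)).comp_sub_left t
  unfold fbmCovariance
  rw [integral_div, integral_sub ((intervalIntegrable_rpow' ha).add intervalIntegrable_const) hint,
    integral_add (intervalIntegrable_rpow' ha) intervalIntegrable_const, integral_rpow_from_zero ha,
    integral_const, integral_abs_sub_rpow ha ht0 htT, smul_eq_mul, sub_zero, sub_zero]
  field_simp
  ring

theorem integral_integral_fbmCovariance {a T : ℝ} (ha : -1 < a) (hT : 0 ≤ T) :
    ∫ t in (0:ℝ)..T, ∫ s in (0:ℝ)..T, fbmCovariance a s t = T ^ (a + 2) / (a + 2) := by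
  have ha1 : -1 < a + 1 := by linarith
  have ha1_ne : a + 1 ≠ 0 := by linarith
  have ha2_ne : a + 2 ≠ 0 := by linarith
  have hpow_succ : T ^ (a + 2) = T ^ (a + 1) * T := by
    rw [show a + 2 = a + 1 + 1 by ring, rpow_add' hT (by linarith), rpow_one]
  have hint : IntervalIntegrable (fun t => (T - t) ^ (a + 1)) volume 0 T := by
    simpa using (intervalIntegrable_rpow' ha1 (a := T) (b := 0)).comp_sub_left T
  have hreflect : ∫ t in (0:ℝ)..T, (T - t) ^ (a + 1) = T ^ (a + 2) / (a + 2) := by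
    rw [integral_comp_sub_left (fun x => x ^ (a + 1)), sub_self, sub_zero,
      integral_rpow_from_zero ha1, show a + 1 + 1 = a + 2 by ring]
  have hlinear : IntervalIntegrable (fun t => T ^ (a + 1) + (a + 1) * T * t ^ a) volume 0 T :=
    intervalIntegrable_const.add ((intervalIntegrable_rpow' ha).const_mul _)
  have hinner : Set.EqOn (fun t => ∫ s in (0:ℝ)..T, fbmCovariance a s t)
      (fun t => (T ^ (a + 1) + (a + 1) * T * t ^ a - t ^ (a + 1) - (T - t) ^ (a + 1))
        / (2 * (a + 1))) (Set.uIcc 0 T) := fun t ht => by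
    rw [Set.uIcc_of_le hT] at ht
    exact integral_fbmCovariance ha ht.1 ht.2
  rw [integral_congr hinner, integral_div, integral_sub (hlinear.sub (intervalIntegrable_rpow' ha1)) hint,
    integral_sub hlinear (intervalIntegrable_rpow' ha1),
    integral_add intervalIntegrable_const ((intervalIntegrable_rpow' ha).const_mul _),
    integral_const_mul, integral_const, integral_rpow_from_zero ha, integral_rpow_from_zero ha1,
    hreflect, show a + 1 + 1 = a + 2 by ring, hpow_succ, smul_eq_mul, sub_zero]
  field_simp
  ring

theorem fbm_cov_double_integral (H T : ℝ) (hH : H ∈ Set.Ioo (0:ℝ) 1) (hT : 0 < T) :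
    ∫ t in (0:ℝ)..T, ∫ s in (0:ℝ)..T,
        (s ^ (2*H) + t ^ (2*H) - |t - s| ^ (2*H)) / 2
      = T ^ (2*H + 2) / (2*H + 2) :=
  integral_integral_fbmCovariance (by linarith [hH.1]) hT.le
end

section
/- Let H ∈ (0,1), T > 0, a, σ ∈ ℝ, and let K : [0,T] × [0,T] → ℝ be a measurable function with K(s,r) = 0 whenever r > s and ∫₀ˢ K(s,r)² dr = s^{2H} for all s ∈ [0,T]. Then for every continuous function b : [0,T] → ℝ, ∫₀ᵀ ∫₀ᵀ (∫_{max(r,θ)}ᵀ σ² K(s,r) K(s,θ) e^{a s + σ b(s)} ds)² dθ dr ≤ T σ⁴ ∫₀ᵀ s^{4H} e^{2 a s + 2 σ b(s)} ds. -/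
/-!
Put `E s = exp (a s + σ b s)` and `A r = ∫₀ᵀ K(s,r)² E(s) ds`. Cauchy–Schwarz in `s` with weight
`E` bounds the square of the inner integral by `σ⁴ A(r) A(θ)`, so the double integral is at most
`σ⁴ (∫₀ᵀ A)²`. Since `K(s,·)` vanishes beyond `s`, Fubini and the variance identity give
`∫₀ᵀ A = ∫₀ᵀ s^{2H} E(s) ds`, and Cauchy–Schwarz against the constant `1` squares this at the cost
of the factor `T`.
-/

open Set MeasureTheory Real

namespace MeasureTheory

variable {α : Type*} [MeasurableSpace α] {μ : Measure α}

theorem sq_integral_mul_le_integral_sq_mul_integral_sq {u v : α → ℝ} (hu : MemLp u 2 μ)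
    (hv : MemLp v 2 μ) :
    (∫ x, u x * v x ∂μ) ^ 2 ≤ (∫ x, u x ^ 2 ∂μ) * ∫ x, v x ^ 2 ∂μ := by
  have inner_eq {f g : α → ℝ} (hf : MemLp f 2 μ) (hg : MemLp g 2 μ) :
      inner ℝ (hf.toLp f) (hg.toLp g) = ∫ x, f x * g x ∂μ := by
    rw [L2.inner_def]
    refine integral_congr_ae ?_
    filter_upwards [hf.coeFn_toLp, hg.coeFn_toLp] with x hfx hgx
    rw [hfx, hgx, Real.inner_apply]
  simpa only [sq, inner_eq] using real_inner_mul_inner_self_le (hu.toLp u) (hv.toLp v)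

theorem sq_integral_le_measureReal_univ_mul_integral_sq [IsFiniteMeasure μ] {g : α → ℝ}
    (hg : MemLp g 2 μ) : (∫ x, g x ∂μ) ^ 2 ≤ μ.real univ * ∫ x, g x ^ 2 ∂μ := by
  simpa using sq_integral_mul_le_integral_sq_mul_integral_sq (memLp_const (1 : ℝ)) hg

theorem sq_integral_mul_mul_le {u v w : α → ℝ} (hu : AEStronglyMeasurable u μ)
    (hv : AEStronglyMeasurable v μ) (hw : AEStronglyMeasurable w μ) (hw0 : 0 ≤ w)
    (hu2 : Integrable (fun x => u x ^ 2 * w x) μ) (hv2 : Integrable (fun x => v x ^ 2 * w x) μ) :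
    (∫ x, u x * v x * w x ∂μ) ^ 2 ≤ (∫ x, u x ^ 2 * w x ∂μ) * ∫ x, v x ^ 2 * w x ∂μ := by
  have sq_mul_sqrt (f : α → ℝ) (x : α) : (f x * √(w x)) ^ 2 = f x ^ 2 * w x := by
    rw [mul_pow, sq_sqrt (hw0 x)]
  have memLp_mul_sqrt {f : α → ℝ} (hf : AEStronglyMeasurable f μ)
      (hf2 : Integrable (fun x => f x ^ 2 * w x) μ) : MemLp (fun x => f x * √(w x)) 2 μ :=
    (memLp_two_iff_integrable_sq (hf.mul (continuous_sqrt.comp_aestronglyMeasurable hw))).2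
      (by simpa only [Pi.mul_apply, sq_mul_sqrt] using hf2)
  have hprod (x : α) : u x * √(w x) * (v x * √(w x)) = u x * v x * w x := by
    rw [mul_mul_mul_comm, mul_self_sqrt (hw0 x)]
  simpa only [hprod, sq_mul_sqrt] using
    sq_integral_mul_le_integral_sq_mul_integral_sq (memLp_mul_sqrt hu hu2) (memLp_mul_sqrt hv hv2)

theorem integral_integral_sq_le_sq_integral {G : α → α → ℝ} {A : α → ℝ} (hA : Integrable A μ)
    (hG : ∀ᵐ r ∂μ, ∀ᵐ θ ∂μ, G r θ ^ 2 ≤ A r * A θ) :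
    ∫ r, ∫ θ, G r θ ^ 2 ∂μ ∂μ ≤ (∫ r, A r ∂μ) ^ 2 := by
  have inner_le : ∀ᵐ r ∂μ, ∫ θ, G r θ ^ 2 ∂μ ≤ A r * ∫ θ, A θ ∂μ := hG.mono fun r hr =>
    (integral_mono_of_nonneg (ae_of_all _ fun θ => sq_nonneg _) (hA.const_mul _) hr).trans_eq
      (integral_const_mul _ _)
  calc ∫ r, ∫ θ, G r θ ^ 2 ∂μ ∂μ ≤ ∫ r, A r * ∫ θ, A θ ∂μ ∂μ :=
        integral_mono_of_nonneg (ae_of_all _ fun r => integral_nonneg fun θ => sq_nonneg _)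
          (hA.mul_const _) inner_le
    _ = (∫ r, A r ∂μ) ^ 2 := by rw [integral_mul_const, sq]

section Kernel

variable {K : α → α → ℝ} {E : α → ℝ}

theorem integrable_kernel_sq_mul [SFinite μ] (hK : Measurable (Function.uncurry K))
    (hE : AEStronglyMeasurable E μ) (hE0 : 0 ≤ E)
    (hslice : ∀ᵐ s ∂μ, Integrable (fun r => K s r ^ 2) μ)
    (hV : Integrable (fun s => (∫ r, K s r ^ 2 ∂μ) * E s) μ) :
    Integrable (Function.uncurry fun s r => K s r ^ 2 * E s) (μ.prod μ) := by
  have hmeas : AEStronglyMeasurable (Function.uncurry fun s r => K s r ^ 2 * E s) (μ.prod μ) :=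
    (hK.pow_const 2).aestronglyMeasurable.mul hE.comp_fst
  refine (integrable_prod_iff hmeas).2 ⟨hslice.mono fun s hs => hs.mul_const (E s), ?_⟩
  refine hV.congr (ae_of_all _ fun s => ?_)
  simp only [Function.uncurry_apply_pair, ← integral_mul_const]
  exact integral_congr_ae (ae_of_all _ fun r =>
    (Real.norm_of_nonneg (mul_nonneg (sq_nonneg _) (hE0 s))).symm)

theorem sq_integral_kernel_mul_le {ν : Measure α} (hν : ν ≤ μ)
    (hK : Measurable (Function.uncurry K))
    (hE : AEStronglyMeasurable E μ) (hE0 : 0 ≤ E) {r θ : α}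
    (hr : Integrable (fun s => K s r ^ 2 * E s) μ) (hθ : Integrable (fun s => K s θ ^ 2 * E s) μ) :
    (∫ s, K s r * K s θ * E s ∂ν) ^ 2 ≤
      (∫ s, K s r ^ 2 * E s ∂μ) * ∫ s, K s θ ^ 2 * E s ∂μ := by
  have nonneg (x s : α) : 0 ≤ K s x ^ 2 * E s := mul_nonneg (sq_nonneg _) (hE0 s)
  refine (sq_integral_mul_mul_le hK.of_uncurry_right.aestronglyMeasurable
    hK.of_uncurry_right.aestronglyMeasurable (hE.mono_measure hν) hE0 (hr.mono_measure hν)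
    (hθ.mono_measure hν)).trans ?_
  exact mul_le_mul (integral_mono_measure hν (ae_of_all _ (nonneg r)) hr)
    (integral_mono_measure hν (ae_of_all _ (nonneg θ)) hθ) (integral_nonneg (nonneg θ))
    (integral_nonneg (nonneg r))

theorem integral_integral_sq_integral_kernel_le [SFinite μ] (c : ℝ) {ν : α → α → Measure α}
    (hν : ∀ᵐ r ∂μ, ∀ᵐ θ ∂μ, ν r θ ≤ μ) (hK : Measurable (Function.uncurry K))
    (hE : AEStronglyMeasurable E μ) (hE0 : 0 ≤ E)
    (hslice : ∀ᵐ s ∂μ, Integrable (fun r => K s r ^ 2) μ)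
    (hV : Integrable (fun s => (∫ r, K s r ^ 2 ∂μ) * E s) μ) :
    ∫ r, ∫ θ, (∫ s, c * K s r * K s θ * E s ∂ν r θ) ^ 2 ∂μ ∂μ ≤
      c ^ 2 * (∫ s, (∫ r, K s r ^ 2 ∂μ) * E s ∂μ) ^ 2 := by
  have hf := integrable_kernel_sq_mul hK hE hE0 hslice hV
  have hA : Integrable (fun r => c * ∫ s, K s r ^ 2 * E s ∂μ) μ :=
    hf.integral_prod_right.const_mul c
  have hG : ∀ᵐ r ∂μ, ∀ᵐ θ ∂μ, (∫ s, c * K s r * K s θ * E s ∂ν r θ) ^ 2 ≤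
      (c * ∫ s, K s r ^ 2 * E s ∂μ) * (c * ∫ s, K s θ ^ 2 * E s ∂μ) := by
    filter_upwards [hν, hf.prod_left_ae] with r hνr hr
    filter_upwards [hνr, hf.prod_left_ae] with θ hνθ hθ
    calc (∫ s, c * K s r * K s θ * E s ∂ν r θ) ^ 2
        = c ^ 2 * (∫ s, K s r * K s θ * E s ∂ν r θ) ^ 2 := by
          simp only [mul_assoc, integral_const_mul, mul_pow]
      _ ≤ c ^ 2 * ((∫ s, K s r ^ 2 * E s ∂μ) * ∫ s, K s θ ^ 2 * E s ∂μ) :=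
          mul_le_mul_of_nonneg_left (sq_integral_kernel_mul_le hνθ hK hE hE0 hr hθ) (sq_nonneg c)
      _ = _ := by ring
  calc _ ≤ (∫ r, c * ∫ s, K s r ^ 2 * E s ∂μ ∂μ) ^ 2 := integral_integral_sq_le_sq_integral hA hG
    _ = _ := by
      rw [integral_const_mul, ← integral_integral_swap hf, mul_pow]
      simp only [integral_mul_const]

end Kernel

end MeasureTheory

theorem setIntegral_Ioc_eq_intervalIntegral_of_forall_eq_zero {g : ℝ → ℝ} {a s T : ℝ}
    (has : a ≤ s) (hsT : s ≤ T) (hzero : ∀ r ∈ Ioc s T, g r = 0) :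
    ∫ r in Ioc a T, g r = ∫ r in a..s, g r := by
  rw [intervalIntegral.integral_of_le has]
  exact setIntegral_eq_of_subset_of_forall_sdiff_eq_zero measurableSet_Ioc
    (Ioc_subset_Ioc_right hsT) fun r hr => hzero r ⟨not_le.1 fun h => hr.2 ⟨hr.1.1, h⟩, hr.1.2⟩

theorem IntervalIntegrable.integrableOn_Ioc_of_forall_eq_zero {g : ℝ → ℝ} {a s T : ℝ}
    (hg : IntervalIntegrable g volume a s) (hzero : ∀ r ∈ Ioc s T, g r = 0) :
    IntegrableOn g (Ioc a T) :=
  (hg.1 : IntegrableOn g (Ioc a s)).of_forall_sdiff_eq_zero measurableSet_Ioc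
    fun r hr => hzero r ⟨not_le.1 fun h => hr.2 ⟨hr.1.1, h⟩, hr.1.2⟩

theorem ContinuousOn.memLp_restrict_Ioc {g : ℝ → ℝ} {a b : ℝ} (p : ENNReal)
    (hg : ContinuousOn g (Icc a b)) : MemLp g p (volume.restrict (Ioc a b)) := by
  obtain ⟨C, hC⟩ := isCompact_Icc.exists_bound_of_continuousOn hg
  have hmeas : AEStronglyMeasurable g (volume.restrict (Ioc a b)) :=
    (hg.mono Ioc_subset_Icc_self).aestronglyMeasurable measurableSet_Ioc
  refine (memLp_top_of_bound hmeas C ?_).mono_exponent le_top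
  exact (ae_restrict_mem measurableSet_Ioc).mono fun x hx => hC x (Ioc_subset_Icc_self hx)

theorem integrableOn_sq_and_setIntegral_sq_of_forall_eq_zero {K : ℝ → ℝ → ℝ} {H T s : ℝ}
    (hKzero : ∀ s ∈ Icc (0:ℝ) T, ∀ r ∈ Icc (0:ℝ) T, s < r → K s r = 0)
    (hKvar : ∀ s ∈ Icc (0:ℝ) T, ∫ r in (0:ℝ)..s, (K s r) ^ 2 = s ^ (2*H)) (hs : s ∈ Ioc 0 T) :
    IntegrableOn (fun r => K s r ^ 2) (Ioc 0 T) ∧ ∫ r in Ioc 0 T, K s r ^ 2 = s ^ (2 * H) := by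
  have hzero : ∀ r ∈ Ioc s T, K s r ^ 2 = 0 := fun r hr => by
    rw [hKzero s (Ioc_subset_Icc_self hs) r ⟨hs.1.le.trans hr.1.le, hr.2⟩ hr.1, sq, zero_mul]
  have hvar := hKvar s (Ioc_subset_Icc_self hs)
  -- a nonzero interval integral is not the junk value of a non-integrable function
  have hint : IntervalIntegrable (fun r => K s r ^ 2) volume 0 s :=
    intervalIntegral.intervalIntegrable_of_integral_ne_zero
      (hvar.trans_ne (rpow_pos_of_pos hs.1 _).ne')
  exact ⟨hint.integrableOn_Ioc_of_forall_eq_zero hzero,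
    (setIntegral_Ioc_eq_intervalIntegral_of_forall_eq_zero hs.1.le hs.2 hzero).trans hvar⟩

theorem sq_rpow_mul_exp {s : ℝ} (hs : 0 ≤ s) (p x : ℝ) :
    (s ^ p * exp x) ^ 2 = s ^ (2 * p) * exp (2 * x) := by
  rw [mul_pow, ← rpow_natCast, ← rpow_mul hs, ← exp_nat_mul, mul_comm p]
  norm_num

theorem second_derivative_bound (H T a σ : ℝ) (hH : H ∈ Set.Ioo (0:ℝ) 1) (hT : 0 < T)
    (K : ℝ → ℝ → ℝ)
    (hKmeas : Measurable (Function.uncurry K))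
    (hKzero : ∀ s ∈ Icc (0:ℝ) T, ∀ r ∈ Icc (0:ℝ) T, s < r → K s r = 0)
    (hKvar : ∀ s ∈ Icc (0:ℝ) T, ∫ r in (0:ℝ)..s, (K s r) ^ 2 = s ^ (2*H))
    (b : ℝ → ℝ) (hb : ContinuousOn b (Icc 0 T)) :
    ∫ r in (0:ℝ)..T, ∫ θ in (0:ℝ)..T,
        (∫ s in (max r θ)..T, σ^2 * K s r * K s θ * Real.exp (a * s + σ * b s)) ^ 2
      ≤ T * σ^4 * ∫ s in (0:ℝ)..T, s ^ (4*H) * Real.exp (2*a*s + 2*σ * b s) := by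
  set μ := volume.restrict (Ioc 0 T)
  set E : ℝ → ℝ := fun s => Real.exp (a * s + σ * b s)
  set g : ℝ → ℝ := fun s => s ^ (2 * H) * E s
  have hE : ContinuousOn E (Icc 0 T) :=
    continuous_exp.comp_continuousOn ((continuousOn_id.const_smul a).add (hb.const_smul σ))
  have hg : ContinuousOn g (Icc 0 T) :=
    (continuous_rpow_const (mul_nonneg zero_le_two hH.1.le)).continuousOn.mul hE
  have hKsq {s : ℝ} (hs : s ∈ Ioc 0 T) :=
    integrableOn_sq_and_setIntegral_sq_of_forall_eq_zero hKzero hKvar hs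
  have hVg : (fun s => (∫ r, K s r ^ 2 ∂μ) * E s) =ᵐ[μ] g :=
    (ae_restrict_mem measurableSet_Ioc).mono fun s hs => congrArg (· * E s) (hKsq hs).2
  have hν : ∀ᵐ r ∂μ, ∀ᵐ θ ∂μ, volume.restrict (Ioc (max r θ) T) ≤ μ := by
    filter_upwards [ae_restrict_mem measurableSet_Ioc] with r hr
    exact ae_of_all _ fun θ => Measure.restrict_mono
      (Ioc_subset_Ioc_left (le_max_of_le_left hr.1.le)) le_rfl
  have key := integral_integral_sq_integral_kernel_le (σ ^ 2) hν hKmeas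
    ((hE.mono Ioc_subset_Icc_self).aestronglyMeasurable measurableSet_Ioc)
    (fun s => (exp_pos _).le) ((ae_restrict_mem measurableSet_Ioc).mono fun s hs => (hKsq hs).1)
    ((memLp_one_iff_integrable.1 (hg.memLp_restrict_Ioc 1)).congr hVg.symm)
  rw [integral_congr_ae hVg] at key
  have hμT : μ.real univ = T := by simp [μ, hT.le]
  have hg_sq : ∫ s, g s ^ 2 ∂μ = ∫ s in Ioc 0 T, s ^ (4 * H) * exp (2 * a * s + 2 * σ * b s) :=
    setIntegral_congr_fun measurableSet_Ioc fun s hs => by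
      simp only [g, E, sq_rpow_mul_exp hs.1.le]
      ring_nf
  simp only [intervalIntegral.integral_of_le hT.le]
  calc _ = ∫ r, ∫ θ, (∫ s in Ioc (max r θ) T, σ ^ 2 * K s r * K s θ * E s) ^ 2 ∂μ ∂μ :=
        setIntegral_congr_fun measurableSet_Ioc fun r hr => setIntegral_congr_fun measurableSet_Ioc
          fun θ hθ => by rw [intervalIntegral.integral_of_le (max_le hr.2 hθ.2)]
    _ ≤ (σ ^ 2) ^ 2 * (∫ s, g s ∂μ) ^ 2 := key
    _ ≤ (σ ^ 2) ^ 2 * (μ.real univ * ∫ s, g s ^ 2 ∂μ) :=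
        mul_le_mul_of_nonneg_left (sq_integral_le_measureReal_univ_mul_integral_sq
          (hg.memLp_restrict_Ioc 2)) (sq_nonneg _)
    _ = _ := by rw [hμT, hg_sq]; ring
end
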